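/- For all positive integers a, b with b ≤ a, there exists n such that every 2-coloring of the edges of K_{n,k} (for some k) contains a monochromatic K_{a,b}; concretely, taking k = 2b and n = a·2^{2b} suffices: for every function COL : [n] × [2b] → {1,2}, there exist A ⊆ [n] with |A| = a, B ⊆ [2b] with |B| = b, and a color c ∈ {1,2} with COL(x,y) = c for all x ∈ A, y ∈ B. -/

import Mathlib

/-!
Encode each left vertex `x` by its colour vector `COL x : [k] → {1,2}`. With `n = a·2^k`,
pigeonhole gives `a` left vertices sharing one vector `p`; pigeonhole again on `p`, with `k = 2b`,
gives `b` right vertices on which `p` takes one colour `c`.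
-/

theorem Fintype.exists_card_eq_forall_eq_of_mul_le_card {α β : Type*} [Fintype α] [Fintype β]
    [Nonempty β] (f : α → β) {m : ℕ} (h : Fintype.card β * m ≤ Fintype.card α) :
    ∃ (s : Finset α) (y : β), s.card = m ∧ ∀ x ∈ s, f x = y := by
  classical
  obtain ⟨y, -, hy⟩ := Finset.exists_le_card_fiber_of_mul_le_card_of_maps_to
    (s := Finset.univ) (f := f) (fun x _ => Finset.mem_univ (f x)) Finset.univ_nonempty h
  obtain ⟨s, hs, hcard⟩ := Finset.exists_subset_card_eq hy
  exact ⟨s, y, hcard, fun x hx => (Finset.mem_filter.mp (hs hx)).2⟩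

theorem exists_monochromatic_biclique {X Y C : Type*} [Fintype X] [Fintype Y] [Fintype C]
    [Nonempty C] (COL : X → Y → C) {a b : ℕ}
    (hX : Fintype.card C ^ Fintype.card Y * a ≤ Fintype.card X)
    (hY : Fintype.card C * b ≤ Fintype.card Y) :
    ∃ (A : Finset X) (B : Finset Y) (c : C), A.card = a ∧ B.card = b ∧ ∀ x ∈ A, ∀ y ∈ B, COL x y = c := by
  classical
  obtain ⟨A, p, hA, hAp⟩ := Fintype.exists_card_eq_forall_eq_of_mul_le_card COL
    (by rwa [Fintype.card_fun])
  obtain ⟨B, c, hB, hBc⟩ := Fintype.exists_card_eq_forall_eq_of_mul_le_card p hY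
  exact ⟨A, B, c, hA, hB, fun x hx y hy => by rw [hAp x hx, hBc y hy]⟩

theorem stmt_1_general (a b : ℕ)
    (COL : Fin (a * 2 ^ (2 * b)) → Fin (2 * b) → Fin 2) :
    ∃ (A : Finset (Fin (a * 2 ^ (2 * b)))) (B : Finset (Fin (2 * b))) (c : Fin 2),
      A.card = a ∧ B.card = b ∧ ∀ x ∈ A, ∀ y ∈ B, COL x y = c :=
  exists_monochromatic_biclique COL (by simp only [Fintype.card_fin, mul_comm, le_refl])
    (by simp only [Fintype.card_fin, le_refl])

/-- Bipartite Ramsey theorem: for `b ≤ a`, taking `k = 2b` and `n = a·2^(2b)`,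
every 2-coloring of `K_{n,k}` contains a monochromatic `K_{a,b}`. -/
theorem stmt_1 (a b : ℕ) (ha : 0 < a) (hb : 0 < b) (hba : b ≤ a)
    (COL : Fin (a * 2 ^ (2 * b)) → Fin (2 * b) → Fin 2) :
    ∃ (A : Finset (Fin (a * 2 ^ (2 * b)))) (B : Finset (Fin (2 * b))) (c : Fin 2),
      A.card = a ∧ B.card = b ∧ ∀ x ∈ A, ∀ y ∈ B, COL x y = c :=
  stmt_1_general a b COL
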